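/- Let S be a bijective APN S-box on GF(2)^n (n ≥ 3) that fixes every input of Hamming weight 1. Then S has no fixed point x of Hamming weight 3. -/
import Mathlib


def ddt (n m : ℕ) (S : (Fin n → ZMod 2) → (Fin m → ZMod 2))
    (i : Fin n → ZMod 2) (j : Fin m → ZMod 2) : ℕ :=
  (Finset.univ.filter (fun x => S x + S (x + i) = j)).card

/-- `S` is almost perfect nonlinear: every DDT entry for nonzero input difference is at most 2. -/
def apn (n : ℕ) (S : (Fin n → ZMod 2) → (Fin n → ZMod 2)) : Prop :=
  ∀ i : Fin n → ZMod 2, i ≠ 0 → ∀ j, ddt n n S i j ≤ 2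

/-- Hamming weight of an element of `GF(2)^n`. -/
def hw (n : ℕ) (x : Fin n → ZMod 2) : ℕ := (Finset.univ.filter (fun i => x i ≠ 0)).card

theorem apn_no_weight_three_fixed_point (n : ℕ) (hn : 3 ≤ n)
    (S : (Fin n → ZMod 2) → (Fin n → ZMod 2)) (hS : Function.Bijective S) (hapn : apn n S)
    (hfix : ∀ x : Fin n → ZMod 2, hw n x = 1 → S x = x) :
    ∀ x : Fin n → ZMod 2, hw n x = 3 → S x ≠ x := by
  intro x hx hfx
  have hone : ∀ v : ZMod 2, v ≠ 0 → v = 1 := by decide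
  have h2 : ∀ v : ZMod 2, v + v = 0 := by decide
  rw [hw, Finset.card_eq_three] at hx
  obtain ⟨a, b, c, hab, hac, hbc, hset⟩ := hx
  have hxmem : ∀ j, x j ≠ 0 ↔ (j = a ∨ j = b ∨ j = c) := by
    intro j
    constructor
    · intro h
      have hj : j ∈ Finset.univ.filter (fun i => x i ≠ 0) := by simp [h]
      rw [hset] at hj; simpa using hj
    · intro h
      have hj : j ∈ ({a, b, c} : Finset (Fin n)) := by simpa using h
      rw [← hset] at hj; simpa using hj
  set e : Fin n → (Fin n → ZMod 2) := fun i j => if j = i then 1 else 0 with he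
  have hxval : ∀ j, x j = e a j + e b j + e c j := by
    intro j
    by_cases hj : j = a ∨ j = b ∨ j = c
    · have h1 : x j = 1 := hone _ ((hxmem j).2 hj)
      rcases hj with h | h | h <;> subst h <;>
        simp [h1, he, hab, hac, hbc, hab.symm, hac.symm, hbc.symm]
    · push_neg at hj
      obtain ⟨h1, h2, h3⟩ := hj
      have h0 : x j = 0 := by
        by_contra hne
        exact (by tauto : ¬ (j = a ∨ j = b ∨ j = c)) ((hxmem j).1 hne)
      simp [h0, he, h1, h2, h3]
  have hwe : ∀ i : Fin n, hw n (e i) = 1 := by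
    intro i
    have : Finset.univ.filter (fun j => e i j ≠ 0) = {i} := by
      ext j; simp [he]
    rw [hw, this, Finset.card_singleton]
  have hSe : ∀ i : Fin n, S (e i) = e i := fun i => hfix _ (hwe i)
  set z : Fin n → ZMod 2 := e a + e b with hz
  have hznz : z ≠ 0 := by
    intro h
    have := congrFun h a
    simp [hz, he, hab, Pi.add_apply] at this
  -- arithmetic identities
  have haz : e a + z = e b := by
    funext j
    simp only [hz, Pi.add_apply]
    linear_combination h2 (e a j)
  have hbz : e b + z = e a := by
    funext j
    simp only [hz, Pi.add_apply]
    linear_combination h2 (e b j)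
  have hcz : e c + z = x := by
    funext j
    simp only [hz, Pi.add_apply, hxval j]
    ring
  have hxz : x + z = e c := by
    funext j
    simp only [hz, Pi.add_apply, hxval j]
    linear_combination h2 (e a j) + h2 (e b j)
  -- memberships in the DDT filter
  have hmem : ∀ y ∈ ({e a, e b, e c, x} : Finset (Fin n → ZMod 2)),
      y ∈ Finset.univ.filter (fun y => S y + S (y + z) = z) := by
    intro y hy
    simp only [Finset.mem_insert, Finset.mem_singleton] at hy
    rcases hy with rfl | rfl | rfl | rfl <;>
      simp only [Finset.mem_filter, Finset.mem_univ, true_and]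
    · rw [haz, hSe, hSe, hz]
    · rw [hbz, hSe, hSe, hz]; funext j; simp [Pi.add_apply]; ring
    · rw [hcz, hSe, hfx, hz]
      funext j
      simp only [Pi.add_apply, hxval j]
      linear_combination h2 (e c j)
    · rw [hxz, hSe, hfx, hz]
      funext j
      simp only [Pi.add_apply, hxval j]
      linear_combination h2 (e c j)
  -- distinctness
  have hx1 : x a = 1 := hone _ ((hxmem a).2 (Or.inl rfl))
  have hx2 : x b = 1 := hone _ ((hxmem b).2 (Or.inr (Or.inl rfl)))
  have hne_ab : e a ≠ e b := by
    intro h; have := congrFun h a; simp [he, hab] at this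
  have hne_ac : e a ≠ e c := by
    intro h; have := congrFun h a; simp [he, hac] at this
  have hne_bc : e b ≠ e c := by
    intro h; have := congrFun h b; simp [he, hbc] at this
  have hne_ax : e a ≠ x := by
    intro h; have := congrFun h b; simp [he, hab.symm, hx2] at this
  have hne_bx : e b ≠ x := by
    intro h; have := congrFun h a; simp [he, hab, hx1] at this
  have hne_cx : e c ≠ x := by
    intro h; have := congrFun h a; simp [he, hac, hx1] at this
  have hcard : ({e a, e b, e c, x} : Finset (Fin n → ZMod 2)).card = 4 := by
    rw [Finset.card_insert_of_notMem (by simp [hne_ab, hne_ac, hne_ax]),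
        Finset.card_insert_of_notMem (by simp [hne_bc, hne_bx]),
        Finset.card_insert_of_notMem (by simp [hne_cx]),
        Finset.card_singleton]
  have hle : 4 ≤ ddt n n S z z := by
    rw [ddt, ← hcard]
    exact Finset.card_le_card hmem
  have := hapn z hznz z
  omega
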